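/- arXiv:math/0605318 — 3 statements merged into one kernel-verified Lean document; each statement's English description precedes it below -/
import Mathlib

section
/- The characteristic polynomials p_k of the matrices N_k satisfy the recursion p_k(x) = (x² − 4x + 2) p_{k−1}(x) − p_{k−2}(x) for k ≥ 2, with p₀(x) = (x² − 5x + 3)(x − 2)² and p₁(x) = (x³ − 8x² + 17x − 5)(x − 2)²(x − 1). -/
/-!
Expanding `det (X - N)` along its last row and then along the last column of the resulting
minor, the corner structure of `N` gives the three-term recurrence
`p (n + 4) = (X - 2) p (n + 3) - p (n + 2)` for the characteristic polynomials of the leading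
principal submatrices of all sizes. Applying it twice eliminates the odd sizes:
`p (n + 4) = ((X - 2)² - 2) p (n + 2) - p n`, and `(X - 2)² - 2 = X² - 4X + 2`. The initial
values come from the sizes `2` and `3`, which are computed directly.
-/

open Polynomial Matrix

/-- The matrix `N_k = A_kᵀ A_k` of size `4 + 2k` (indexed from `0`): it is the
tridiagonal-plus-corner matrix with diagonal `(2, 2, 3, 2, 2, …, 2)`, entries
`N(0,2) = N(2,0) = N(1,2) = N(2,1) = 1`, `N(0,1) = N(1,0) = 0`, and
`N(i, i+1) = N(i+1, i) = 1` for `i ≥ 2`; all other entries are `0`. -/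
def NMat (k : ℕ) : Matrix (Fin (4 + 2 * k)) (Fin (4 + 2 * k)) ℚ := fun i j =>
  if (i : ℕ) = (j : ℕ) then (if (i : ℕ) = 2 then 3 else 2)
  else if ((i : ℕ) = 0 ∧ (j : ℕ) = 2) ∨ ((i : ℕ) = 2 ∧ (j : ℕ) = 0) ∨
          ((i : ℕ) = 1 ∧ (j : ℕ) = 2) ∨ ((i : ℕ) = 2 ∧ (j : ℕ) = 1) then 1
  else if ((j : ℕ) = (i : ℕ) + 1 ∧ 2 ≤ (i : ℕ)) ∨
          ((i : ℕ) = (j : ℕ) + 1 ∧ 2 ≤ (j : ℕ)) then 1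
  else 0

namespace Matrix

variable {R : Type*} [CommRing R]

theorem det_eq_of_tridiagonal_last {n : ℕ} (M : Matrix (Fin (n + 2)) (Fin (n + 2)) R)
    (hrow : ∀ j : Fin n, M (Fin.last _) j.castSucc.castSucc = 0)
    (hcol : ∀ i : Fin n, M i.castSucc.castSucc (Fin.last _) = 0) :
    M.det = M (Fin.last _) (Fin.last _) * (M.submatrix Fin.castSucc Fin.castSucc).det -
      M (Fin.last _) (Fin.last n).castSucc * M (Fin.last n).castSucc (Fin.last _) *
        ((M.submatrix Fin.castSucc Fin.castSucc).submatrix Fin.castSucc Fin.castSucc).det := by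
  have hminor : (M.submatrix Fin.castSucc (Fin.last n).castSucc.succAbove).det =
      M (Fin.last n).castSucc (Fin.last _) *
        ((M.submatrix Fin.castSucc Fin.castSucc).submatrix Fin.castSucc Fin.castSucc).det := by
    rw [det_succ_column _ (Fin.last n), Fin.sum_univ_castSucc]
    simp only [submatrix_apply, Fin.succAbove_castSucc_self, Fin.succ_last, hcol, mul_zero,
      zero_mul, Finset.sum_const_zero, zero_add, Fin.succAbove_last, submatrix_submatrix]
    have hcols : (Fin.last n).castSucc.succAbove ∘ Fin.castSucc = Fin.castSucc ∘ Fin.castSucc :=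
      funext fun i => Fin.succAbove_castSucc_of_lt _ _ (Fin.castSucc_lt_last i)
    rw [hcols, Fin.val_last, Even.neg_one_pow ⟨n, rfl⟩, one_mul]
  rw [det_succ_row M (Fin.last _), Fin.sum_univ_castSucc, Fin.sum_univ_castSucc]
  simp only [hrow, mul_zero, zero_mul, Finset.sum_const_zero, zero_add, Fin.succAbove_last,
    hminor, Fin.val_last, Fin.val_castSucc,
    (Odd.neg_one_pow ⟨n, by ring⟩ : (-1 : R) ^ (n + 1 + n) = -1),
    (Even.neg_one_pow ⟨n + 1, rfl⟩ : (-1 : R) ^ (n + 1 + (n + 1)) = 1)]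
  ring

theorem charmatrix_submatrix {m n : Type*} [Fintype m] [Fintype n] [DecidableEq m]
    [DecidableEq n] (M : Matrix n n R) {e : m → n} (he : Function.Injective e) :
    charmatrix (M.submatrix e e) = (charmatrix M).submatrix e e := by
  ext i j : 1
  by_cases h : i = j
  · simp [h]
  · simp [h, he.ne h]

end Matrix

theorem recurrence_two_step {R : Type*} [CommRing R] {a : ℕ → R} {t : R}
    (h : ∀ n, a (n + 2) = t * a (n + 1) - a n) (n : ℕ) :
    a (n + 4) = (t ^ 2 - 2) * a (n + 2) - a n := by
  linear_combination h (n + 2) + t * h (n + 1) + h n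

/-- `NMat` extended to every size: `NMat k = gramMat (4 + 2 * k)`, and `gramMat n` is the leading
principal submatrix of `gramMat (n + 1)`. -/
def gramMat (n : ℕ) : Matrix (Fin n) (Fin n) ℚ := fun i j =>
  if (i : ℕ) = (j : ℕ) then (if (i : ℕ) = 2 then 3 else 2)
  else if ((i : ℕ) = 0 ∧ (j : ℕ) = 2) ∨ ((i : ℕ) = 2 ∧ (j : ℕ) = 0) ∨
          ((i : ℕ) = 1 ∧ (j : ℕ) = 2) ∨ ((i : ℕ) = 2 ∧ (j : ℕ) = 1) then 1
  else if ((j : ℕ) = (i : ℕ) + 1 ∧ 2 ≤ (i : ℕ)) ∨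
          ((i : ℕ) = (j : ℕ) + 1 ∧ 2 ≤ (j : ℕ)) then 1
  else 0

theorem charpoly_NMat (k : ℕ) : (NMat k).charpoly = (gramMat (2 * k + 2 + 2)).charpoly := by
  rw [show 2 * k + 2 + 2 = 4 + 2 * k by ring]
  rfl

theorem gramMat_submatrix_castSucc (n : ℕ) :
    (gramMat (n + 1)).submatrix Fin.castSucc Fin.castSucc = gramMat n :=
  rfl

theorem charpoly_gramMat_two : (gramMat 2).charpoly = (X - 2) ^ 2 := by
  rw [charpoly, det_fin_two]
  simp [gramMat, map_ofNat]
  ring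

theorem charpoly_gramMat_three : (gramMat 3).charpoly = (X - 2) * ((X - 2) * (X - 3) - 2) := by
  rw [charpoly, det_fin_three]
  simp [gramMat, map_ofNat]
  ring

theorem charpoly_gramMat_add_four (n : ℕ) :
    (gramMat (n + 4)).charpoly =
      (X - 2) * (gramMat (n + 3)).charpoly - (gramMat (n + 2)).charpoly := by
  show (gramMat (n + 2 + 2)).charpoly =
    (X - 2) * (gramMat (n + 2 + 1)).charpoly - (gramMat (n + 2)).charpoly
  set N := charmatrix (gramMat (n + 2 + 2))
  have hzero : ∀ i : Fin (n + 2), N (Fin.last _) i.castSucc.castSucc = 0 ∧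
      N i.castSucc.castSucc (Fin.last _) = 0 := by
    intro i
    have hne : i.castSucc.castSucc ≠ Fin.last _ := (Fin.castSucc_lt_last _).ne
    simp only [N, charmatrix_apply_ne _ _ _ hne, charmatrix_apply_ne _ _ _ hne.symm, gramMat,
      Fin.val_last, Fin.val_castSucc]
    have hi := i.isLt
    constructor <;> split_ifs <;> simp_all <;> omega
  have hdiag : N (Fin.last _) (Fin.last _) = X - 2 := by
    simp [N, gramMat, map_ofNat]
  have hcorner : N (Fin.last _) (Fin.last _).castSucc = -1 ∧
      N (Fin.last _).castSucc (Fin.last _) = -1 := by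
    have hne := (Fin.castSucc_lt_last (Fin.last (n + 2))).ne
    simp [N, charmatrix_apply_ne _ _ _ hne.symm, gramMat]
  rw [charpoly, det_eq_of_tridiagonal_last N (fun j => (hzero j).1) (fun i => (hzero i).2),
    ← charmatrix_submatrix _ (Fin.castSucc_injective _),
    ← charmatrix_submatrix _ (Fin.castSucc_injective _), gramMat_submatrix_castSucc,
    gramMat_submatrix_castSucc, hdiag, hcorner.1, hcorner.2, charpoly, charpoly]
  ring

theorem charpoly_gramMat_four : (gramMat 4).charpoly = (X ^ 2 - 5 * X + 3) * (X - 2) ^ 2 := by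
  rw [charpoly_gramMat_add_four 0, charpoly_gramMat_three, charpoly_gramMat_two]
  ring

/-- The characteristic polynomials `p_k(x) = det(x·I − N_k)` satisfy the recursion
`p_k = (x² − 4x + 2) p_{k−1} − p_{k−2}` for `k ≥ 2`, with
`p₀ = (x² − 5x + 3)(x − 2)²` and `p₁ = (x³ − 8x² + 17x − 5)(x − 2)²(x − 1)`. -/
theorem stmt_6 :
    (∀ k : ℕ, (NMat (k + 2)).charpoly =
        (X ^ 2 - 4 * X + 2) * (NMat (k + 1)).charpoly - (NMat k).charpoly) ∧
    (NMat 0).charpoly = (X ^ 2 - 5 * X + 3) * (X - 2) ^ 2 ∧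
    (NMat 1).charpoly = (X ^ 3 - 8 * X ^ 2 + 17 * X - 5) * (X - 2) ^ 2 * (X - 1) := by
  refine ⟨fun k => ?_, charpoly_gramMat_four, ?_⟩
  · have h := recurrence_two_step (a := fun n => (gramMat (n + 2)).charpoly)
      charpoly_gramMat_add_four (2 * k + 2)
    rw [charpoly_NMat, charpoly_NMat, charpoly_NMat, show 2 * (k + 2) + 2 = 2 * k + 2 + 4 by ring,
      show 2 * (k + 1) + 2 = 2 * k + 2 + 2 by ring]
    linear_combination h
  · show (gramMat 6).charpoly = _
    rw [charpoly_gramMat_add_four 2, charpoly_gramMat_add_four 1, charpoly_gramMat_four,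
      charpoly_gramMat_three]
    ring
end

section
/- For every k ≥ 0, the characteristic polynomial p_k(x) of N_k is divisible by (x − 2)². -/
open Polynomial

/-- The polynomials `p_k`, defined by `p₀(x) = (x² − 5x + 3)(x − 2)²`,
`p₁(x) = (x³ − 8x² + 17x − 5)(x − 2)²(x − 1)`, and the recursion
`p_k(x) = (x² − 4x + 2)p_{k−1}(x) − p_{k−2}(x)`. -/
noncomputable def pSeq : ℕ → Polynomial ℚ
  | 0 => (X ^ 2 - 5 * X + 3) * (X - 2) ^ 2
  | 1 => (X ^ 3 - 8 * X ^ 2 + 17 * X - 5) * (X - 2) ^ 2 * (X - 1)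
  | (k + 2) => (X ^ 2 - 4 * X + 2) * pSeq (k + 1) - pSeq k

theorem dvd_of_two_step_recurrence {R : Type*} [CommRing R] {s : ℕ → R} {d : R} (a b : R)
    (hs : ∀ k, s (k + 2) = a * s (k + 1) + b * s k) (h0 : d ∣ s 0) (h1 : d ∣ s 1) :
    ∀ k, d ∣ s k := by
  intro k
  induction k using Nat.twoStepInduction with
  | zero => exact h0
  | one => exact h1
  | more k hk hk1 => rw [hs]; exact dvd_add (hk1.mul_left a) (hk.mul_left b)

theorem pSeq_add_two (k : ℕ) :
    pSeq (k + 2) = (X ^ 2 - 4 * X + 2) * pSeq (k + 1) + -1 * pSeq k := by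
  rw [pSeq]; ring

/-- For every `k ≥ 0`, the characteristic polynomial `p_k(x)` is divisible by `(x − 2)²`. -/
theorem stmt_7 : ∀ k : ℕ, (X - 2) ^ 2 ∣ pSeq k :=
  dvd_of_two_step_recurrence _ _ pSeq_add_two (dvd_mul_left _ _)
    ((dvd_mul_left _ _).mul_right _)
end

section
/- Since the Galois group of x³ − 8x² + 17x − 5 over ℚ is abelian, each root of x³ − 8x² + 17x − 5 is a cyclotomic integer, i.e., lies in ℚ(ζ_n) for some n. -/
open Polynomial

/-- Since the Galois group of `x³ − 8x² + 17x − 5` over `ℚ` is abelian, every root of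
`x³ − 8x² + 17x − 5` is a cyclotomic integer, i.e. lies in `ℚ(ζ_n)` for some `n`. -/
theorem stmt_14 (z : ℂ) (hz : Polynomial.aeval z (X ^ 3 - 8 * X ^ 2 + 17 * X - 5 :
      Polynomial ℚ) = 0) :
    ∃ (n : ℕ) (ζ : ℂ), 0 < n ∧ IsPrimitiveRoot ζ n ∧
      z ∈ Algebra.adjoin ℚ ({ζ} : Set ℂ) := by
  set ζ : ℂ := Complex.exp (2 * Real.pi * Complex.I / 13) with hζdef
  have hζ : IsPrimitiveRoot ζ 13 := Complex.isPrimitiveRoot_exp 13 (by norm_num)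
  refine ⟨13, ζ, by norm_num, hζ, ?_⟩
  have hp : ζ ^ 13 = 1 := hζ.pow_eq_one
  have hne : ζ ≠ 1 := hζ.ne_one (by norm_num)
  have hS : 1 + ζ + ζ^2 + ζ^3 + ζ^4 + ζ^5 + ζ^6 + ζ^7 + ζ^8 + ζ^9 + ζ^10 + ζ^11 + ζ^12 = 0 := by
    have h : (ζ - 1) *
        (1 + ζ + ζ^2 + ζ^3 + ζ^4 + ζ^5 + ζ^6 + ζ^7 + ζ^8 + ζ^9 + ζ^10 + ζ^11 + ζ^12) = 0 := by
      linear_combination hp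
    rcases mul_eq_zero.1 h with h1 | h2
    · exact absurd (sub_eq_zero.1 h1) hne
    · exact h2
  simp only [map_sub, map_add, map_mul, map_pow, aeval_X, map_ofNat] at hz
  set r1 : ℂ := 3 + ζ + ζ^5 + ζ^8 + ζ^12 with hr1
  set r2 : ℂ := 3 + ζ^2 + ζ^3 + ζ^10 + ζ^11 with hr2
  set r3 : ℂ := 3 + ζ^4 + ζ^6 + ζ^7 + ζ^9 with hr3
  have hfac : (z - r1) * (z - r2) * (z - r3) = 0 := by
    rw [hr1, hr2, hr3]
    linear_combination hz + (-z^2 + 10*z - 26) * hS +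
      ((4*ζ + 4*ζ^2 + 3*ζ^3 + 3*ζ^4 + 3*ζ^5 + 3*ζ^6 + ζ^7 + ζ^8 + ζ^9 + ζ^10) * z
        - (4 + 17*ζ + 17*ζ^2 + 14*ζ^3 + 14*ζ^4 + 14*ζ^5 + 14*ζ^6 + 7*ζ^7 + 7*ζ^8 + 7*ζ^9
           + 6*ζ^10 + 3*ζ^11 + 3*ζ^12 + 2*ζ^13 + 2*ζ^14 + 2*ζ^15 + 2*ζ^16 + ζ^17 + ζ^18
           + ζ^19)) * hp
  have hmem : ζ ∈ Algebra.adjoin ℚ ({ζ} : Set ℂ) := Algebra.self_mem_adjoin_singleton ℚ ζ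
  have hmem1 : r1 ∈ Algebra.adjoin ℚ ({ζ} : Set ℂ) := by
    rw [hr1]
    exact add_mem (add_mem (add_mem (add_mem (by exact Subalgebra.natCast_mem _ 3) hmem)
      (pow_mem hmem 5)) (pow_mem hmem 8)) (pow_mem hmem 12)
  have hmem2 : r2 ∈ Algebra.adjoin ℚ ({ζ} : Set ℂ) := by
    rw [hr2]
    exact add_mem (add_mem (add_mem (add_mem (by exact Subalgebra.natCast_mem _ 3)
      (pow_mem hmem 2)) (pow_mem hmem 3)) (pow_mem hmem 10)) (pow_mem hmem 11)
  have hmem3 : r3 ∈ Algebra.adjoin ℚ ({ζ} : Set ℂ) := by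
    rw [hr3]
    exact add_mem (add_mem (add_mem (add_mem (by exact Subalgebra.natCast_mem _ 3)
      (pow_mem hmem 4)) (pow_mem hmem 6)) (pow_mem hmem 7)) (pow_mem hmem 9)
  rcases mul_eq_zero.1 hfac with h12 | h3
  · rcases mul_eq_zero.1 h12 with h1 | h2
    · rw [sub_eq_zero.1 h1]; exact hmem1
    · rw [sub_eq_zero.1 h2]; exact hmem2
  · rw [sub_eq_zero.1 h3]; exact hmem3
end
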